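/- arXiv:2602.03532 — 6 statements merged into one kernel-verified Lean document; each statement's English description precedes it below -/
import Mathlib

section
/- Let m ≥ 1 and set n = 2m+1. Let p, q be complex numbers with p·q = c and p^n + q^n = 2d. Then x = p + q satisfies x^n = 2d + ∑_{j=0}^{m−1} B_{m,j} · c^{m−j} · x^{2j+1}, where B_{m,j} = (−1)^{m−1−j} · (2m+1)/(2j+1) · binom(m+j, 2j). -/
/-!
With `x = p + q` and `c = p * q`, the power sums `p ^ n + q ^ n` are the values at `x` of the
Dickson polynomials of the first kind `D_n(X, c)`. These are `E_n - c E_{n-2}` in terms of the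
Dickson polynomials of the second kind, whose coefficients are diagonal binomial coefficients by
Pascal's rule: `E_n = ∑_k (-c)^k C(n - k, k) X^(n - 2k)`. For `n = 2m + 1` the two binomial
coefficients in front of `c^(m-j) x^(2j+1)` add up to `(2m+1)/(2j+1) C(m+j, 2j)`.
-/

open Finset Polynomial

namespace Polynomial

variable {R : Type*} [CommRing R] (a : R)

noncomputable def dicksonTwoExpansion (r m : ℕ) : R[X] :=
  ∑ jk ∈ antidiagonal m,
    (-C a) ^ jk.2 * ((2 * jk.1 + r + jk.2).choose jk.2 : R[X]) * X ^ (2 * jk.1 + r)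

theorem dicksonTwoExpansion_zero_succ (m : ℕ) :
    dicksonTwoExpansion a 0 (m + 1) =
      X * dicksonTwoExpansion a 1 m - C a * dicksonTwoExpansion a 0 m := by
  -- the Pascal remainder of `E_{2m+2}` is `X * E_{2m+1}` with `j` shifted by one
  have shifted : X ^ (2 * m + 2) + ∑ jk ∈ antidiagonal m,
      (-C a) ^ (jk.2 + 1) * ((2 * jk.1 + jk.2).choose (jk.2 + 1) : R[X]) * X ^ (2 * jk.1) =
      X * dicksonTwoExpansion a 1 m := by
    rcases m with _ | m
    · simp [dicksonTwoExpansion, sq]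
    conv_lhs => rw [Nat.sum_antidiagonal_succ]
    rw [dicksonTwoExpansion, Nat.sum_antidiagonal_succ', mul_add X, mul_sum]
    simp only [Nat.choose_succ_self, Nat.cast_zero, mul_zero, zero_mul, zero_add,
      pow_zero, Nat.choose_zero_right, Nat.cast_one, one_mul]
    refine congrArg₂ (· + ·) (by ring) (sum_congr rfl fun ⟨j, k⟩ _ => ?_)
    rw [show 2 * (j + 1) + k = 2 * j + 1 + (k + 1) by ring]
    ring
  rw [← shifted, dicksonTwoExpansion, dicksonTwoExpansion, Nat.sum_antidiagonal_succ', mul_sum,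
    add_sub_assoc, ← sum_sub_distrib]
  refine congrArg₂ (· + ·) ?_ (sum_congr rfl fun ⟨j, k⟩ _ => ?_)
  · simp only [pow_zero, add_zero, Nat.choose_zero_right, Nat.cast_one, one_mul]
    ring
  · rw [show 2 * j + 0 + (k + 1) = 2 * j + k + 1 by ring, Nat.choose_succ_succ']
    push_cast
    ring_nf

theorem dicksonTwoExpansion_one_succ (m : ℕ) :
    dicksonTwoExpansion a 1 (m + 1) =
      X * dicksonTwoExpansion a 0 (m + 1) - C a * dicksonTwoExpansion a 1 m := by
  rw [dicksonTwoExpansion, dicksonTwoExpansion, dicksonTwoExpansion, Nat.sum_antidiagonal_succ',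
    Nat.sum_antidiagonal_succ', mul_add X, mul_sum, mul_sum, add_sub_assoc, ← sum_sub_distrib]
  refine congrArg₂ (· + ·) ?_ (sum_congr rfl fun ⟨j, k⟩ _ => ?_)
  · simp only [pow_zero, add_zero, Nat.choose_zero_right, Nat.cast_one, one_mul]
    ring
  · rw [show 2 * j + 1 + (k + 1) = 2 * j + 1 + k + 1 by ring, Nat.choose_succ_succ',
      show 2 * j + 0 + (k + 1) = 2 * j + 1 + k by ring]
    push_cast
    ring

theorem dickson_two_eq_dicksonTwoExpansion (m : ℕ) :
    dickson 2 a (2 * m) = dicksonTwoExpansion a 0 m ∧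
      dickson 2 a (2 * m + 1) = dicksonTwoExpansion a 1 m := by
  induction m with
  | zero => norm_num [dicksonTwoExpansion]
  | succ m ih =>
    have even : dickson 2 a (2 * (m + 1)) = dicksonTwoExpansion a 0 (m + 1) := by
      rw [dicksonTwoExpansion_zero_succ, ← ih.1, ← ih.2, mul_add_one, dickson_add_two]
    refine ⟨even, ?_⟩
    rw [dicksonTwoExpansion_one_succ, ← even, ← ih.2,
      show 2 * (m + 1) + 1 = 2 * m + 1 + 2 by ring, dickson_add_two,
      show 2 * m + 1 + 1 = 2 * (m + 1) by ring]

theorem dickson_one_eq_dickson_two_sub (n : ℕ) :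
    dickson 1 a (n + 2) = dickson 2 a (n + 2) - C a * dickson 2 a n := by
  induction n using Nat.twoStepInduction with
  | zero | one => norm_num [dickson_two]; ring
  | more n ih₀ ih₁ =>
    rw [dickson_add_two, ih₁, ih₀, dickson_add_two 2 a (n + 2)]
    linear_combination C a * dickson_add_two 2 a n

theorem dickson_one_two_mul_add_one (m : ℕ) :
    dickson 1 a (2 * m + 1) = ∑ jk ∈ antidiagonal m, (-C a) ^ jk.2 *
      (((2 * jk.1 + jk.2 + 1).choose (2 * jk.1 + 1) +
        (2 * jk.1 + jk.2).choose (2 * jk.1 + 1) : ℕ) : R[X]) * X ^ (2 * jk.1 + 1) := by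
  rcases m with _ | m
  · simp
  rw [show 2 * (m + 1) + 1 = 2 * m + 1 + 2 by ring, dickson_one_eq_dickson_two_sub,
    (dickson_two_eq_dicksonTwoExpansion a m).2, show 2 * m + 1 + 2 = 2 * (m + 1) + 1 by ring,
    (dickson_two_eq_dicksonTwoExpansion a (m + 1)).2, dicksonTwoExpansion, dicksonTwoExpansion,
    Nat.sum_antidiagonal_succ', Nat.sum_antidiagonal_succ', mul_sum, add_sub_assoc,
    ← sum_sub_distrib]
  refine congrArg₂ (· + ·) (by simp) (sum_congr rfl fun ⟨j, k⟩ _ => ?_)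
  rw [Nat.choose_symm_of_eq_add (show 2 * j + 1 + (k + 1) = (k + 1) + (2 * j + 1) by ring),
    Nat.choose_symm_of_eq_add (show 2 * j + 1 + k = k + (2 * j + 1) by ring)]
  push_cast
  ring_nf

theorem dickson_one_mul_eval_add (p q : R) (n : ℕ) :
    (dickson 1 (p * q) n).eval (p + q) = p ^ n + q ^ n := by
  induction n using Nat.twoStepInduction with
  | zero => norm_num
  | one => simp
  | more n ih₀ ih₁ =>
    simp only [dickson_add_two, eval_sub, eval_mul, eval_X, eval_C, ih₀, ih₁]
    ring

end Polynomial

theorem Nat.cast_choose_add_choose_eq {K : Type*} [Field K] [CharZero K] (j k : ℕ) :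
    (((2 * j + k + 1).choose (2 * j + 1) + (2 * j + k).choose (2 * j + 1) : ℕ) : K) =
      (2 * ((j + k : ℕ) : K) + 1) / (2 * j + 1) * (2 * j + k).choose (2 * j) := by
  have ratio : ((2 * j + k).choose (2 * j + 1) * (2 * j + 1) : K) =
      (2 * j + k).choose (2 * j) * k := by
    have := Nat.choose_succ_right_eq (2 * j + k) (2 * j)
    rw [Nat.add_sub_cancel_left] at this
    exact_mod_cast this
  have hj : (2 * j + 1 : K) ≠ 0 := by exact_mod_cast Nat.succ_ne_zero (2 * j)
  field_simp
  rw [Nat.choose_succ_succ']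
  push_cast
  linear_combination 2 * ratio

theorem pow_add_pow_two_mul_add_one_eq_sum {K : Type*} [Field K] [CharZero K] (p q : K) (m : ℕ) :
    p ^ (2 * m + 1) + q ^ (2 * m + 1) = ∑ j ∈ range (m + 1),
      (-1) ^ (m - j) * ((2 * (m : K) + 1) / (2 * j + 1) * (m + j).choose (2 * j)) *
        (p * q) ^ (m - j) * (p + q) ^ (2 * j + 1) := by
  rw [← dickson_one_mul_eval_add, dickson_one_two_mul_add_one, eval_finsetSum,
    Nat.sum_antidiagonal_eq_sum_range_succ_mk]
  refine sum_congr rfl fun j hj => ?_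
  obtain ⟨k, rfl⟩ := Nat.exists_eq_add_of_le (Nat.lt_succ_iff.mp (mem_range.mp hj))
  simp only [eval_mul, eval_pow, eval_neg, eval_C, eval_X, eval_natCast]
  rw [Nat.add_sub_cancel_left, Nat.cast_choose_add_choose_eq, show j + k + j = 2 * j + k by ring]
  ring

theorem stmt_4_general (m : ℕ) (p q c d : ℂ)
    (hc : p * q = c) (hd : p ^ (2 * m + 1) + q ^ (2 * m + 1) = 2 * d) :
    (p + q) ^ (2 * m + 1) =
      2 * d + ∑ j ∈ Finset.range m,
        ((-1 : ℂ) ^ (m - 1 - j) * (2 * (m : ℂ) + 1) / (2 * (j : ℂ) + 1) *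
          ((m + j).choose (2 * j) : ℂ)) * c ^ (m - j) * (p + q) ^ (2 * j + 1) := by
  rw [← hc, ← hd, pow_add_pow_two_mul_add_one_eq_sum, sum_range_succ, add_right_comm,
    ← sum_add_distrib, sum_eq_zero, zero_add]
  · have : (2 * m + 1 : ℂ) ≠ 0 := by exact_mod_cast Nat.succ_ne_zero (2 * m)
    simp [← two_mul, this]
  · intro j hj
    rw [show m - j = m - 1 - j + 1 by have := mem_range.mp hj; omega, pow_succ]
    ring

theorem stmt_4 (m : ℕ) (hm : 1 ≤ m) (p q c d : ℂ)
    (hc : p * q = c) (hd : p ^ (2 * m + 1) + q ^ (2 * m + 1) = 2 * d) :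
    (p + q) ^ (2 * m + 1) =
      2 * d + ∑ j ∈ Finset.range m,
        ((-1 : ℂ) ^ (m - 1 - j) * (2 * (m : ℂ) + 1) / (2 * (j : ℂ) + 1) *
          ((m + j).choose (2 * j) : ℂ)) * c ^ (m - j) * (p + q) ^ (2 * j + 1) :=
  stmt_4_general m p q c d hc hd
end

section
/- For every r ≥ 1 and complex numbers p, q: p^r + q^r = ∑_{i=0}^{⌊r/2⌋} (−1)^i · (r/(r−i)) · binom(r−i, i) · (p·q)^i · (p+q)^{r−2i}. -/
/-! With `s = p + q` and `e = p * q`, the power sums `p ^ n + q ^ n` satisfy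
`P (n + 2) = s * P (n + 1) - e * P n`. Writing the right-hand side as a sum over the antidiagonal
`i + j = n` of `(-e) ^ i * L j i * s ^ (j - i)`, this recurrence is exactly Pascal's rule for the
coefficients `L`, so `L` is Pascal's triangle started from `2` instead of `1` at its apex.
Comparing with the binomial coefficients gives `j * L j i = (j + i) * choose j i`, which is the
coefficient `r / (r - i) * choose (r - i) i` of the statement. -/

open Finset

def lucasTriangle : ℕ → ℕ → ℕ
  | 0, 0 => 2
  | 0, _ + 1 => 0
  | _ + 1, 0 => 1
  | j + 1, i + 1 => lucasTriangle j i + lucasTriangle j (i + 1)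

theorem lucasTriangle_eq_zero_of_lt : ∀ {j i : ℕ}, j < i → lucasTriangle j i = 0
  | 0, _ + 1, _ => rfl
  | j + 1, i + 1, h => by
    rw [lucasTriangle, lucasTriangle_eq_zero_of_lt (by omega), lucasTriangle_eq_zero_of_lt (by omega)]

theorem lucasTriangle_succ_succ (j i : ℕ) :
    lucasTriangle (j + 1) (i + 1) = (j + 1).choose (i + 1) + j.choose i := by
  induction j generalizing i with
  | zero => cases i <;> rfl
  | succ j ih =>
    cases i with
    | zero => rw [lucasTriangle, ih]; simp [lucasTriangle]; ring
    | succ i => rw [lucasTriangle, ih, ih, Nat.choose_succ_succ' (j + 1), Nat.choose_succ_succ' j]; ring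

theorem mul_lucasTriangle (j i : ℕ) : j * lucasTriangle j i = (j + i) * j.choose i := by
  cases j with
  | zero => cases i <;> simp
  | succ j =>
    cases i with
    | zero => simp [lucasTriangle]
    | succ i =>
      rw [lucasTriangle_succ_succ, mul_add, Nat.add_one_mul_choose_eq]
      ring

variable {R : Type*} [CommRing R]

def lucasSum (s e : R) (n : ℕ) : R :=
  ∑ x ∈ antidiagonal n, (-e) ^ x.1 * lucasTriangle x.2 x.1 * s ^ (x.2 - x.1)

theorem lucasSum_add_two (s e : R) (n : ℕ) :
    lucasSum s e (n + 2) = s * lucasSum s e (n + 1) - e * lucasSum s e n := by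
  have shift : ∀ i j : ℕ, (lucasTriangle j (i + 1) : R) * s ^ (j - i)
      = s * (lucasTriangle j (i + 1) * s ^ (j - (i + 1))) := by
    intro i j
    rcases lt_or_ge i j with h | h
    · rw [show j - i = j - (i + 1) + 1 by omega, pow_succ]; ring
    · simp [lucasTriangle_eq_zero_of_lt (Nat.lt_succ_of_le h)]
  simp only [lucasSum]
  rw [Nat.sum_antidiagonal_succ', Nat.sum_antidiagonal_succ, Nat.sum_antidiagonal_succ]
  dsimp only
  simp only [lucasTriangle, Nat.cast_zero, mul_zero, zero_mul, zero_add, pow_zero, one_mul,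
    Nat.cast_one, Nat.sub_zero, mul_add, mul_sum, add_sub_assoc, ← sum_sub_distrib, ← pow_succ']
  refine congrArg _ (sum_congr rfl fun x _ => ?_)
  rw [Nat.add_sub_add_right, Nat.cast_add]
  linear_combination (-e) ^ (x.1 + 1) * shift x.1 x.2

theorem lucasSum_zero (s e : R) : lucasSum s e 0 = 2 := by
  simp [lucasSum, lucasTriangle]

theorem lucasSum_one (s e : R) : lucasSum s e 1 = s := by
  simp [lucasSum, Nat.sum_antidiagonal_succ, lucasTriangle]

theorem pow_add_pow_eq_lucasSum (p q : R) (n : ℕ) :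
    p ^ n + q ^ n = lucasSum (p + q) (p * q) n := by
  induction n using Nat.twoStepInduction with
  | zero => rw [lucasSum_zero]; norm_num
  | one => rw [lucasSum_one]; ring
  | more n ih₀ ih₁ =>
    rw [lucasSum_add_two, ← ih₀, ← ih₁]
    ring

theorem lucasTriangle_sub_eq_div {K : Type*} [Field K] [CharZero K] {n i : ℕ} (hi : i < n) :
    (lucasTriangle (n - i) i : K) = n / (n - i : ℕ) * (n - i).choose i := by
  have key : ((n - i : ℕ) : K) * lucasTriangle (n - i) i = n * (n - i).choose i := by
    exact_mod_cast Nat.sub_add_cancel hi.le ▸ mul_lucasTriangle (n - i) i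
  rw [div_mul_eq_mul_div, eq_div_iff (by exact_mod_cast (by omega : n - i ≠ 0))]
  linear_combination key

theorem stmt_5 (r : ℕ) (hr : 1 ≤ r) (p q : ℂ) :
    p ^ r + q ^ r =
      ∑ i ∈ Finset.range (r / 2 + 1),
        (-1 : ℂ) ^ i * ((r : ℂ) / ((r - i : ℕ) : ℂ)) * ((r - i).choose i : ℂ) *
          (p * q) ^ i * (p + q) ^ (r - 2 * i) := by
  rw [pow_add_pow_eq_lucasSum, lucasSum, Nat.sum_antidiagonal_eq_sum_range_succ_mk]
  symm
  refine (sum_congr rfl fun i hi => ?_).trans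
    (sum_subset (range_subset_range.2 (by omega)) fun i _ hi => ?_)
  · have hi : i < r := by rw [mem_range] at hi; omega
    rw [mul_assoc _ (_ / _), ← lucasTriangle_sub_eq_div hi, neg_pow,
      show r - i - i = r - 2 * i by omega]
    ring
  · rw [mem_range] at hi
    simp [lucasTriangle_eq_zero_of_lt (by omega : r - i < i)]
end

section
/- For all integers m > j ≥ 0, the sum ∑_{t=0}^{m−j} (−1)^t · binom(2m+1, m−j−t) · (2(j+t)+1) · binom(2j+t, t) equals 0. -/
/-!
The identity is the case `k = m - j`, `a = 2 j` of the vanishing of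
`∑_{t ≤ k} (-1)^t C(2k+a+1, k-t) (a+2t+1) C(a+t, t)` for `k ≥ 1`, a Wilf–Zeilberger
telescoping: `k` times the `t`-th summand is `G (t+1) - G t` for the certificate `G` below,
and `G` vanishes at `t = 0` and `t = k + 1`.
-/

open Finset

/-- Uses `C(2k+a+1, k+a+1+t)` rather than the equal `C(2k+a+1, k-t)`: truncated subtraction
would make the latter `1` instead of `0` at `t = k + 1`. -/
def wzCertificate (k a t : ℕ) : ℤ :=
  (-1) ^ (t + 1) * t * (t + k + a + 1) * ((2 * k + a + 1).choose (k + a + 1 + t) : ℤ) *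
    ((a + t).choose t : ℤ)

lemma wzCertificate_zero (k a : ℕ) : wzCertificate k a 0 = 0 := by
  simp [wzCertificate]

lemma wzCertificate_succ_self (k a : ℕ) : wzCertificate k a (k + 1) = 0 := by
  rw [wzCertificate, Nat.choose_eq_zero_of_lt (by omega)]
  simp

lemma mul_summand_eq_wzCertificate_sub {k a t : ℕ} (ht : t ≤ k) :
    (k : ℤ) * ((-1) ^ t * ((2 * k + a + 1).choose (k - t) : ℤ) * (a + 2 * t + 1) *
      ((a + t).choose t : ℤ)) = wzCertificate k a (t + 1) - wzCertificate k a t := by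
  have hsymm : (2 * k + a + 1).choose (k - t) = (2 * k + a + 1).choose (k + a + 1 + t) := by
    rw [← Nat.choose_symm (by omega : k + a + 1 + t ≤ 2 * k + a + 1)]
    congr 1
    omega
  have absorb_lower : ((t : ℤ) + 1) * ((a + t + 1).choose (t + 1) : ℤ) =
      (a + t + 1) * ((a + t).choose t : ℤ) := by
    exact_mod_cast ((Nat.add_one_mul_choose_eq (a + t) t).trans (mul_comm _ _)).symm
  have absorb_upper : ((k : ℤ) + a + t + 2) * ((2 * k + a + 1).choose (k + a + 1 + t + 1) : ℤ) =
      ((k : ℤ) - t) * ((2 * k + a + 1).choose (k + a + 1 + t) : ℤ) := by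
    have h := Nat.choose_succ_right_eq (2 * k + a + 1) (k + a + 1 + t)
    rw [show 2 * k + a + 1 - (k + a + 1 + t) = k - t by omega] at h
    have h' : ((2 * k + a + 1).choose (k + a + 1 + t + 1) : ℤ) * ((k + a + 1 + t : ℕ) + 1) =
        ((2 * k + a + 1).choose (k + a + 1 + t) : ℤ) * ((k - t : ℕ) : ℤ) := by
      exact_mod_cast h
    push_cast [ht] at h'
    linear_combination h'
  rw [hsymm, wzCertificate, wzCertificate, show a + (t + 1) = a + t + 1 by ring,
    show k + a + 1 + (t + 1) = k + a + 1 + t + 1 by ring]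
  push_cast
  linear_combination -(-1 : ℤ) ^ t *
    (((k : ℤ) + a + t + 2) * ((2 * k + a + 1).choose (k + a + 1 + t + 1) : ℤ) * absorb_lower +
      ((a : ℤ) + t + 1) * ((a + t).choose t : ℤ) * absorb_upper)

theorem sum_neg_one_pow_mul_choose_mul_choose_eq_zero {k : ℕ} (hk : 0 < k) (a : ℕ) :
    ∑ t ∈ range (k + 1), (-1 : ℤ) ^ t * ((2 * k + a + 1).choose (k - t) : ℤ) *
      (a + 2 * t + 1) * ((a + t).choose t : ℤ) = 0 := by
  have htelescope : (k : ℤ) * ∑ t ∈ range (k + 1), (-1 : ℤ) ^ t *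
      ((2 * k + a + 1).choose (k - t) : ℤ) * (a + 2 * t + 1) * ((a + t).choose t : ℤ) = 0 := by
    rw [mul_sum, sum_congr rfl fun t ht => mul_summand_eq_wzCertificate_sub
      (Nat.lt_succ_iff.mp (mem_range.mp ht)), sum_range_sub, wzCertificate_succ_self,
      wzCertificate_zero, sub_zero]
  exact (mul_eq_zero.mp htelescope).resolve_left (by exact_mod_cast hk.ne')

theorem stmt_6 (m j : ℕ) (h : j < m) :
    ∑ t ∈ Finset.range (m - j + 1),
      (-1 : ℤ) ^ t * ((2 * m + 1).choose (m - j - t) : ℤ) * (2 * (j + t) + 1) *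
        ((2 * j + t).choose t : ℤ) = 0 := by
  obtain ⟨k, rfl⟩ := Nat.exists_eq_add_of_le h.le
  rw [Nat.add_sub_cancel_left, show 2 * (j + k) + 1 = 2 * k + 2 * j + 1 by ring]
  convert sum_neg_one_pow_mul_choose_mul_choose_eq_zero (by omega : 0 < k) (2 * j) using 3
  push_cast
  ring
end

section
/- For all integers m > j ≥ 0, ∑_{t=0}^{m−j−1} (−1)^t · binom(2m+1, m−j−t) · (2(j+t)+1) · binom(2j+t, t) = (−1)^{m−j−1} · (2m+1) · binom(m+j, m−j). -/
/-!
With `n = m - j` the summand `a t` has the Gosper antidifference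
`G s = (-1)^s * s * (s + 2j + n + 1) * C(2j+2n+1, n-s) * C(2j+s, s)`, i.e. `n * a t = G t - G (t+1)`
for `t < n`. The sum therefore telescopes to `(G 0 - G n) / n`, where `G 0 = 0` and
`G n = (-1)^n * n * (2j+2n+1) * C(2j+n, n)`.
-/

open Finset

namespace CardanoCoefficient

def antidiff (j n s : ℕ) : ℤ :=
  (-1) ^ s * s * (s + 2 * j + n + 1) * ((2 * j + 2 * n + 1).choose (n - s) : ℤ) *
    ((2 * j + s).choose s : ℤ)

theorem mul_summand_eq_antidiff_sub (j n t : ℕ) (ht : t < n) :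
    (n : ℤ) * ((-1) ^ t * ((2 * j + 2 * n + 1).choose (n - t) : ℤ) * (2 * (j + t) + 1) *
        ((2 * j + t).choose t : ℤ)) =
      antidiff j n t - antidiff j n (t + 1) := by
  obtain ⟨d, rfl⟩ : ∃ d, n = t + 1 + d := ⟨n - (t + 1), by omega⟩
  have hd₁ : t + 1 + d - t = d + 1 := by omega
  have hd : t + 1 + d - (t + 1) = d := by omega
  have hN : 2 * j + 2 * (t + 1 + d) + 1 - d = t + 2 * j + (t + 1 + d) + 2 := by omega
  have top : ((2 * j + 2 * (t + 1 + d) + 1).choose (d + 1) * (d + 1) : ℤ) =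
      (2 * j + 2 * (t + 1 + d) + 1).choose d * (t + 2 * j + (t + 1 + d) + 2) := by
    exact_mod_cast hN ▸ Nat.choose_succ_right_eq (2 * j + 2 * (t + 1 + d) + 1) d
  have bottom : ((2 * j + t + 1) * (2 * j + t).choose t : ℤ) =
      (2 * j + t + 1).choose (t + 1) * (t + 1) := by
    exact_mod_cast Nat.add_one_mul_choose_eq (2 * j + t) t
  simp only [antidiff, hd₁, hd]
  push_cast
  linear_combination
    (-1 : ℤ) ^ t * (2 * j + t + 1) * ((2 * j + t).choose t : ℤ) * top +
      (-1 : ℤ) ^ t * (t + 2 * j + (t + 1 + d) + 2) *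
        ((2 * j + 2 * (t + 1 + d) + 1).choose d : ℤ) * bottom

theorem sum_range_summand (j n : ℕ) (hn : 0 < n) :
    ∑ t ∈ range n,
      (-1 : ℤ) ^ t * ((2 * j + 2 * n + 1).choose (n - t) : ℤ) * (2 * (j + t) + 1) *
        ((2 * j + t).choose t : ℤ) =
      (-1 : ℤ) ^ (n - 1) * (2 * j + 2 * n + 1) * ((2 * j + n).choose n : ℤ) := by
  obtain ⟨k, rfl⟩ : ∃ k, n = k + 1 := ⟨n - 1, by omega⟩
  have telescoped := sum_range_sub' (antidiff j (k + 1)) (k + 1)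
  rw [← sum_congr rfl fun t ht => mul_summand_eq_antidiff_sub j (k + 1) t (mem_range.mp ht),
    ← mul_sum] at telescoped
  apply mul_left_cancel₀ (show ((k + 1 : ℕ) : ℤ) ≠ 0 by positivity)
  simp only [antidiff, Nat.sub_self, Nat.choose_zero_right, Nat.add_sub_cancel] at telescoped ⊢
  push_cast at telescoped ⊢
  linear_combination telescoped

end CardanoCoefficient

theorem stmt_7 (m j : ℕ) (h : j < m) :
    ∑ t ∈ Finset.range (m - j),
      (-1 : ℤ) ^ t * ((2 * m + 1).choose (m - j - t) : ℤ) * (2 * (j + t) + 1) *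
        ((2 * j + t).choose t : ℤ) =
      (-1 : ℤ) ^ (m - j - 1) * (2 * m + 1) * ((m + j).choose (m - j) : ℤ) := by
  obtain ⟨n, rfl⟩ : ∃ n, m = j + n := ⟨m - j, by omega⟩
  have hn : j + n - j = n := by omega
  have h2m : 2 * (j + n) + 1 = 2 * j + 2 * n + 1 := by ring
  have hmj : j + n + j = 2 * j + n := by ring
  rw [hn, h2m, hmj, CardanoCoefficient.sum_range_summand j n (by omega)]
  push_cast
  ring
end

section
/- Let n be odd, c, d real with d^2 − c^n < 0 and c > 0. Set α = arccos(d / c^{n/2}). Then for every integer j, x_j = 2·sqrt(c)·cos((α + 2πj)/n) is a real root of the generalized Cardano polynomial C_{n,c,d}(x) = x^n − ∑_{j=0}^{m−1} B_{m,j} c^{m−j} x^{2j+1} − 2d, where n = 2m+1. -/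
/-!
Write `x = √c · u` with `u = 2 cos θ`. Since `c = √c ^ 2`, each term `c ^ (m - i) * x ^ (2 i + 1)`
equals `√c ^ (2 m + 1) * u ^ (2 i + 1)`, and the numbers `-B_{m,i}` (with `1` for `i = m`) are the
coefficients of the Vieta–Lucas polynomial `C_{2m+1}` (`Polynomial.Chebyshev.C`); the latter follows
from `C_{n+4} = (X² - 2) C_{n+2} - C_n` and Pascal's rule. So the Cardano polynomial at `x` is
`√c ^ (2 m + 1) * 2 cos ((2 m + 1) θ) - 2 d`, which vanishes because `(2 m + 1) θ = α + 2 π j` and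
`cos α = d / √c ^ (2 m + 1)`.
-/

open Finset Polynomial

theorem Nat.choose_add_two_add_two_add_choose (N K : ℕ) :
    (N + 2).choose (K + 2) + N.choose (K + 2) = N.choose K + 2 * (N + 1).choose (K + 2) := by
  simp only [Nat.choose_succ_succ']
  ring

theorem Nat.two_mul_add_one_mul_choose_add_choose {m i : ℕ} (h : i ≤ m) :
    (2 * i + 1) * ((m + i + 1).choose (2 * i + 1) + (m + i).choose (2 * i + 1)) =
      (2 * m + 1) * (m + i).choose (2 * i) := by
  have h₁ := Nat.add_one_mul_choose_eq (m + i) (2 * i)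
  have h₂ := Nat.choose_succ_right_eq (m + i) (2 * i)
  obtain ⟨k, rfl⟩ := Nat.exists_eq_add_of_le h
  rw [show i + k + i - 2 * i = k by omega] at h₂
  linarith

namespace Polynomial.Chebyshev

/-- The integral form of `(-1) ^ (m + i) * (2 m + 1) / (2 i + 1) * (m + i).choose (2 i)`, see
`Nat.two_mul_add_one_mul_choose_add_choose`. -/
def oddVietaLucasCoeff (m i : ℕ) : ℤ :=
  (-1) ^ (m + i) * ((m + i + 1).choose (2 * i + 1) + (m + i).choose (2 * i + 1) : ℤ)

theorem oddVietaLucasCoeff_of_lt {m i : ℕ} (h : m < i) : oddVietaLucasCoeff m i = 0 := by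
  simp [oddVietaLucasCoeff, Nat.choose_eq_zero_of_lt (by omega : m + i + 1 < 2 * i + 1),
    Nat.choose_eq_zero_of_lt (by omega : m + i < 2 * i + 1)]

theorem oddVietaLucasCoeff_self (m : ℕ) : oddVietaLucasCoeff m m = 1 := by
  simp [oddVietaLucasCoeff, ← two_mul, pow_mul]

theorem oddVietaLucasCoeff_add_two_zero (m : ℕ) :
    oddVietaLucasCoeff (m + 2) 0 = -2 * oddVietaLucasCoeff (m + 1) 0 - oddVietaLucasCoeff m 0 := by
  simp only [oddVietaLucasCoeff, add_zero, mul_zero, zero_add, Nat.choose_one_right, pow_succ]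
  push_cast
  ring

theorem oddVietaLucasCoeff_add_two_succ (m i : ℕ) :
    oddVietaLucasCoeff (m + 2) (i + 1) = oddVietaLucasCoeff (m + 1) i -
      2 * oddVietaLucasCoeff (m + 1) (i + 1) - oddVietaLucasCoeff m (i + 1) := by
  have h₁ := congrArg ((↑) : ℕ → ℤ)
    (Nat.choose_add_two_add_two_add_choose (m + i + 2) (2 * i + 1))
  have h₂ := congrArg ((↑) : ℕ → ℤ)
    (Nat.choose_add_two_add_two_add_choose (m + i + 1) (2 * i + 1))
  simp only [oddVietaLucasCoeff, show m + 2 + (i + 1) = m + i + 1 + 2 by ring,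
    show m + 1 + i = m + i + 1 by ring, show m + 1 + (i + 1) = m + i + 1 + 1 by ring,
    show m + (i + 1) = m + i + 1 by ring, pow_succ]
  push_cast at h₁ h₂ ⊢
  linear_combination (-(-1) ^ (m + i)) * (h₁ + h₂)

variable {R : Type*} [CommRing R]

theorem C_add_four (n : ℤ) : C R (n + 4) = (X ^ 2 - 2) * C R (n + 2) - C R n := by
  have h₀ := C_add_two R n
  have h₁ := C_add_two R (n + 1)
  have h₂ := C_add_two R (n + 2)
  rw [show n + 1 + 2 = n + 3 by ring, show n + 1 + 1 = n + 2 by ring] at h₁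
  rw [show n + 2 + 2 = n + 4 by ring, show n + 2 + 1 = n + 3 by ring] at h₂
  linear_combination h₂ + X * h₁ + h₀

theorem sum_oddVietaLucasCoeff_eq_of_le (x : R) {m N : ℕ} (h : m + 1 ≤ N) :
    ∑ i ∈ range N, (oddVietaLucasCoeff m i : R) * x ^ (2 * i + 1) =
      ∑ i ∈ range (m + 1), (oddVietaLucasCoeff m i : R) * x ^ (2 * i + 1) := by
  refine (sum_subset (range_subset_range.2 h) fun i _ hi => ?_).symm
  rw [oddVietaLucasCoeff_of_lt (by simpa using hi), Int.cast_zero, zero_mul]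

theorem sum_oddVietaLucasCoeff_add_two (x : R) (m : ℕ) :
    ∑ i ∈ range (m + 3), (oddVietaLucasCoeff (m + 2) i : R) * x ^ (2 * i + 1) =
      (x ^ 2 - 2) * ∑ i ∈ range (m + 2), (oddVietaLucasCoeff (m + 1) i : R) * x ^ (2 * i + 1) -
        ∑ i ∈ range (m + 1), (oddVietaLucasCoeff m i : R) * x ^ (2 * i + 1) := by
  have shift : ∑ i ∈ range (m + 3), (oddVietaLucasCoeff (m + 2) i : R) * x ^ (2 * i + 1) =
      x ^ 2 * ∑ i ∈ range (m + 2), (oddVietaLucasCoeff (m + 1) i : R) * x ^ (2 * i + 1) -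
        ∑ i ∈ range (m + 3), (2 * (oddVietaLucasCoeff (m + 1) i : R) * x ^ (2 * i + 1) +
          (oddVietaLucasCoeff m i : R) * x ^ (2 * i + 1)) := by
    rw [sum_range_succ', sum_range_succ' (M := R) _ (m + 2), mul_sum, ← sub_sub,
      ← sum_sub_distrib, sub_eq_add_neg]
    congr 1
    · refine sum_congr rfl fun i _ => ?_
      rw [oddVietaLucasCoeff_add_two_succ]
      push_cast
      ring
    · rw [oddVietaLucasCoeff_add_two_zero]
      push_cast
      ring
  rw [shift, sum_add_distrib]
  simp only [mul_assoc, ← mul_sum]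
  rw [sum_oddVietaLucasCoeff_eq_of_le (m := m + 1) (N := m + 3) x (by omega),
    sum_oddVietaLucasCoeff_eq_of_le (m := m) (N := m + 3) x (by omega)]
  ring

theorem C_two_mul_add_one_eq_sum (m : ℕ) :
    C R (2 * m + 1) = ∑ i ∈ range (m + 1), (oddVietaLucasCoeff m i : R[X]) * X ^ (2 * i + 1) := by
  induction m using Nat.twoStepInduction with
  | zero => simp [oddVietaLucasCoeff_self]
  | one =>
    have h₃ : C R 3 = X * C R 2 - C R 1 := C_add_two R 1
    simp [sum_range_succ, oddVietaLucasCoeff, h₃, C_two]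
    ring
  | more m ih₀ ih₁ =>
    push_cast at ih₀ ih₁ ⊢
    rw [show 2 * ((m : ℤ) + 2) + 1 = 2 * m + 1 + 4 by ring, C_add_four,
      show 2 * (m : ℤ) + 1 + 2 = 2 * (m + 1) + 1 by ring, ih₀, ih₁, sum_oddVietaLucasCoeff_add_two]

end Polynomial.Chebyshev

section Cardano

open Polynomial.Chebyshev

variable {K : Type*} [Field K] [CharZero K]

theorem cardano_coeff_eq_neg_oddVietaLucasCoeff {m i : ℕ} (h : i < m) :
    (-1 : K) ^ (m - 1 - i) * (2 * (m : K) + 1) / (2 * (i : K) + 1) * ((m + i).choose (2 * i) : K) =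
      -(oddVietaLucasCoeff m i : K) := by
  have hchoose : (2 * (i : K) + 1) * (((m + i + 1).choose (2 * i + 1) : K) +
      (m + i).choose (2 * i + 1)) = (2 * m + 1) * (m + i).choose (2 * i) := by
    exact_mod_cast Nat.two_mul_add_one_mul_choose_add_choose h.le
  have hsign : (-1 : K) ^ (m + i) = -(-1) ^ (m - 1 - i) := by
    rw [show m + i = m - 1 - i + (2 * i + 1) by omega, pow_add, pow_succ, pow_mul]
    simp
  have hi : (2 * (i : K) + 1) ≠ 0 := by exact_mod_cast Nat.succ_ne_zero (2 * i)
  push_cast [oddVietaLucasCoeff, hsign]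
  field_simp
  linear_combination -hchoose

theorem cardano_eq_pow_mul_eval_C (m : ℕ) {c s : K} (hs : s ^ 2 = c) (u : K) :
    (s * u) ^ (2 * m + 1) - ∑ i ∈ range m,
        ((-1 : K) ^ (m - 1 - i) * (2 * (m : K) + 1) / (2 * (i : K) + 1) *
          ((m + i).choose (2 * i) : K)) * c ^ (m - i) * (s * u) ^ (2 * i + 1) =
      s ^ (2 * m + 1) * (C K (2 * m + 1)).eval u := by
  have hterm : ∀ i ∈ range (m + 1),
      (oddVietaLucasCoeff m i : K) * c ^ (m - i) * (s * u) ^ (2 * i + 1) =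
        s ^ (2 * m + 1) * ((oddVietaLucasCoeff m i : K) * u ^ (2 * i + 1)) := by
    intro i hi
    rw [← hs, ← pow_mul, mul_pow, show 2 * m + 1 = 2 * (m - i) + (2 * i + 1) by
      have := mem_range.1 hi; omega, pow_add]
    ring
  simp only [C_two_mul_add_one_eq_sum, eval_finsetSum, eval_mul, eval_intCast, eval_pow, eval_X]
  rw [mul_sum, ← sum_congr rfl hterm, sum_range_succ, oddVietaLucasCoeff_self,
    sum_congr rfl fun i hi => by rw [cardano_coeff_eq_neg_oddVietaLucasCoeff (mem_range.1 hi)]]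
  simp only [neg_mul, sum_neg_distrib, Nat.sub_self, pow_zero, Int.cast_one, one_mul]
  ring

end Cardano

open Real

theorem stmt_9 (m : ℕ) (c d : ℝ) (hc : 0 < c)
    (hD : d ^ 2 - c ^ (2 * m + 1) < 0) :
    ∀ j : ℤ,
      (2 * Real.sqrt c *
          Real.cos ((Real.arccos (d / c ^ (((2 * m + 1 : ℕ) : ℝ) / 2)) + 2 * Real.pi * j) /
            (2 * m + 1))) ^ (2 * m + 1) -
        (∑ i ∈ Finset.range m,
          ((-1 : ℝ) ^ (m - 1 - i) * (2 * (m : ℝ) + 1) / (2 * (i : ℝ) + 1) *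
            ((m + i).choose (2 * i) : ℝ)) * c ^ (m - i) *
            (2 * Real.sqrt c *
              Real.cos ((Real.arccos (d / c ^ (((2 * m + 1 : ℕ) : ℝ) / 2)) + 2 * Real.pi * j) /
                (2 * m + 1))) ^ (2 * i + 1)) - 2 * d = 0 := by
  intro j
  have hP : c ^ (((2 * m + 1 : ℕ) : ℝ) / 2) = √c ^ (2 * m + 1) := by
    rw [rpow_div_two_eq_sqrt _ hc.le, rpow_natCast]
  have hPpos : 0 < √c ^ (2 * m + 1) := pow_pos (sqrt_pos.2 hc) _
  have hdP : |d| < √c ^ (2 * m + 1) := by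
    refine abs_lt_of_sq_lt_sq ?_ hPpos.le
    rw [← pow_mul, mul_comm, pow_mul, sq_sqrt hc.le]
    linarith
  rw [hP]
  set θ := (arccos (d / √c ^ (2 * m + 1)) + 2 * π * j) / (2 * m + 1) with hθ
  have hcos : cos ((2 * m + 1) * θ) = d / √c ^ (2 * m + 1) := by
    have hle : |d / √c ^ (2 * m + 1)| ≤ 1 := by
      rw [abs_div, abs_of_pos hPpos]
      exact ((div_lt_one hPpos).2 hdP).le
    rw [hθ, mul_div_cancel₀ _ (by positivity), mul_comm _ (j : ℝ), cos_add_int_mul_two_pi,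
      cos_arccos (abs_le.1 hle).1 (abs_le.1 hle).2]
  rw [show 2 * √c * cos θ = √c * (2 * cos θ) by ring,
    cardano_eq_pow_mul_eval_C m (sq_sqrt hc.le), Chebyshev.C_two_mul_real_cos]
  push_cast
  rw [hcos]
  field_simp
  ring
end

section
/- Let n ≥ 1 and let p, q be complex numbers with p·q = c ≠ 0. Then with ω = exp(2πi/n), the polynomial identity (√c)^n · Ω_n(x/√c) − (p^n + q^n) = ∏_{k=0}^{n−1} (x − p·ω^k − q·ω^{−k}) holds, where Ω_n is the n-th modified Chebyshev polynomial of the first kind. -/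
/-!
Every `w ∈ ℂ` is `z + z⁻¹` for some `z ≠ 0`, and `Ω_n(z + z⁻¹) = zⁿ + z⁻ⁿ`. Writing `x = s(z + z⁻¹)`
and `y = s z`, so that `x = y + pq/y`, each factor splits as
`x - pωᵏ - qω⁻ᵏ = (y - ωᵏp)(y - ω⁻ᵏq)/y`, and `∏ₖ (y - ζᵏa) = yⁿ - aⁿ` for a primitive
`n`-th root `ζ` turns the product into `(yⁿ - pⁿ)(yⁿ - qⁿ)/yⁿ = yⁿ + (pq)ⁿ/yⁿ - (pⁿ + qⁿ)`.
-/

open Finset Polynomial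

/-- The modified Chebyshev (Vieta–Lucas) polynomials, as functions on ℂ. -/
def OmegaC : ℕ → ℂ → ℂ
  | 0, _ => 2
  | 1, x => x
  | n + 2, x => x * OmegaC (n + 1) x - OmegaC n x

theorem OmegaC_add_inv {z : ℂ} (hz : z ≠ 0) : ∀ n, OmegaC n (z + z⁻¹) = z ^ n + z⁻¹ ^ n
  | 0 => by norm_num [OmegaC]
  | 1 => by simp [OmegaC]
  | n + 2 => by
    rw [OmegaC, OmegaC_add_inv hz (n + 1), OmegaC_add_inv hz n]
    linear_combination (z ^ n + z⁻¹ ^ n) * mul_inv_cancel₀ hz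

theorem exists_ne_zero_add_inv_eq {K : Type*} [Field K] [IsAlgClosed K] (w : K) :
    ∃ z : K, z ≠ 0 ∧ z + z⁻¹ = w := by
  obtain ⟨z, hz⟩ := IsAlgClosed.exists_root (C 1 * X ^ 2 + C (-w) * X + C 1)
    (by rw [degree_quadratic one_ne_zero]; decide)
  have hroot : z ^ 2 - w * z + 1 = 0 := by
    simpa [sub_eq_add_neg] using hz
  have hz0 : z ≠ 0 := by
    rintro rfl
    simp at hroot
  refine ⟨z, hz0, ?_⟩
  field_simp
  linear_combination hroot

theorem IsPrimitiveRoot.prod_sub_pow_mul {R : Type*} [CommRing R] [IsDomain R] {ζ : R} {n : ℕ}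
    (hζ : IsPrimitiveRoot ζ n) (hn : 0 < n) (y a : R) :
    ∏ k ∈ range n, (y - ζ ^ k * a) = y ^ n - a ^ n := by
  simpa [eval_prod] using (congrArg (eval y) (X_pow_sub_C_eq_prod hζ hn rfl)).symm

theorem IsPrimitiveRoot.prod_add_div_sub_sub {K : Type*} [Field K] {ζ : K} {n : ℕ}
    (hζ : IsPrimitiveRoot ζ n) (hn : 0 < n) {y : K} (hy : y ≠ 0) (p q : K) :
    ∏ k ∈ range n, (y + p * q / y - p * ζ ^ k - q * ζ ^ (-(k : ℤ))) =
      y ^ n + (p * q) ^ n / y ^ n - (p ^ n + q ^ n) := by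
  have hζ0 : ζ ≠ 0 := hζ.ne_zero hn.ne'
  have hfactor : ∀ k ∈ range n, y + p * q / y - p * ζ ^ k - q * ζ ^ (-(k : ℤ)) =
      (y - ζ ^ k * p) * (y - ζ⁻¹ ^ k * q) / y := by
    intro k _
    rw [zpow_neg, zpow_natCast, inv_pow]
    field_simp
    ring
  rw [prod_congr rfl hfactor, prod_div_distrib, prod_mul_distrib, prod_const, card_range,
    hζ.prod_sub_pow_mul hn, hζ.inv.prod_sub_pow_mul hn]
  field_simp
  ring

theorem stmt_14 (n : ℕ) (hn : 1 ≤ n) (p q c s : ℂ) (hc : p * q = c) (hc0 : c ≠ 0)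
    (hs : s ^ 2 = c) :
    ∀ x : ℂ,
      s ^ n * OmegaC n (x / s) - (p ^ n + q ^ n) =
        ∏ k ∈ Finset.range n,
          (x - p * Complex.exp (2 * Real.pi * Complex.I / n) ^ k -
            q * Complex.exp (2 * Real.pi * Complex.I / n) ^ (-(k : ℤ))) := by
  intro x
  have hs0 : s ≠ 0 := by
    rintro rfl
    exact hc0 (by rw [← hs]; ring)
  obtain ⟨z, hz0, hxz⟩ := exists_ne_zero_add_inv_eq (x / s)
  have hy : s * z ≠ 0 := mul_ne_zero hs0 hz0
  have hΩ : s ^ n * OmegaC n (x / s) = (s * z) ^ n + (p * q) ^ n / (s * z) ^ n := by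
    rw [← hxz, OmegaC_add_inv hz0, hc, ← hs, inv_pow]
    field_simp
    ring
  have hx : x = s * z + p * q / (s * z) := by
    rw [hc, ← hs, ← div_mul_cancel₀ x hs0, ← hxz]
    field_simp
  rw [hΩ, hx, (Complex.isPrimitiveRoot_exp n (by omega)).prod_add_div_sub_sub hn hy]
end
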